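/- arXiv:2008.00130 — 5 statements merged into one kernel-verified Lean document; each statement's English description precedes it below -/
import Mathlib

section
/- The normalizing constant of the n-dimensional GL distribution with density generator g_n(t) = t^{N-1} e^{-a t^s}/(1 + e^{-b t^s})^{2r} equals C_n = [Γ(n/2)/(π^{n/2})] · [s · b^{(1/s)(N + n/2 - 1)} / Γ((1/s)(N + n/2 - 1))] · [Φ*_{2r}(-1, (1/s)(N + n/2 - 1), a/b)]^{-1}, i.e., C_n · ∫_{ℝ^n} g_n(‖x‖²) dx = 1 (taking Σ = I, μ = 0). -/
open MeasureTheory Real Set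

/-- Generalized Hurwitz-Lerch zeta function, integral representation. -/
noncomputable def PhiInt (v z s a : ℝ) : ℝ :=
  (1 / Real.Gamma s) *
    ∫ t in Ioi (0:ℝ), t ^ (s - 1) * Real.exp (-a * t) / (1 - z * Real.exp (-t)) ^ v

/-- The GL density generator. -/
noncomputable def glGen (N a b s r : ℝ) (t : ℝ) : ℝ :=
  t ^ (N - 1) * Real.exp (-a * t ^ s) / (1 + Real.exp (-b * t ^ s)) ^ (2 * r)

/-!
Polar coordinates turn the integral over `ℝⁿ` into a one-dimensional integral in `u = ‖x‖²`, and
the substitutions `v = u ^ s`, `t = b v` identify it, through the integral representation of `Φ*`,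
with `π^(n/2) Γ(p) Φ*_{2r}(-1, p, a / b) / (Γ(n/2) s b^p)`, where `p = (N + n / 2 - 1) / s`.
The integral defining `Φ*` is finite because `(1 + e^(-t))^(-2r) ≤ 2^|2r|` for `t > 0`, so `Φ*`
is positive and can be inverted.
-/

section Substitution

variable {F : Type*} [NormedAddCommGroup F] [NormedSpace ℝ F]

theorem integral_rpow_smul_comp_rpow_Ioi {s : ℝ} (hs : 0 < s) (q : ℝ) (f : ℝ → F) :
    ∫ u in Ioi 0, u ^ (q - 1) • f (u ^ s) = s⁻¹ • ∫ v in Ioi 0, v ^ (q / s - 1) • f v := by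
  rw [← integral_smul,
    ← integral_comp_rpow_Ioi_of_pos hs (g := fun v => s⁻¹ • (v ^ (q / s - 1) • f v))]
  refine setIntegral_congr_fun measurableSet_Ioi fun u (hu : 0 < u) => ?_
  have hpow : u ^ (s - 1) * (u ^ s) ^ (q / s - 1) = u ^ (q - 1) := by
    rw [← rpow_mul hu.le, ← rpow_add hu]
    congr 1
    field_simp
    ring
  simp only [smul_smul]
  congr 1
  rw [← hpow]
  field_simp

theorem integral_rpow_smul_comp_mul_left_Ioi (p : ℝ) (g : ℝ → F) {b : ℝ} (hb : 0 < b) :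
    ∫ v in Ioi 0, v ^ (p - 1) • g (b * v) = (b ^ p)⁻¹ • ∫ t in Ioi 0, t ^ (p - 1) • g t := by
  have hscale := integral_comp_mul_left_Ioi (fun t => t ^ (p - 1) • g t) 0 hb
  rw [mul_zero] at hscale
  calc ∫ v in Ioi 0, v ^ (p - 1) • g (b * v)
      = ∫ v in Ioi 0, (b ^ (p - 1))⁻¹ • ((b * v) ^ (p - 1) • g (b * v)) := by
        refine setIntegral_congr_fun measurableSet_Ioi fun v (hv : 0 < v) => ?_
        rw [smul_smul, mul_rpow hb.le hv.le, inv_mul_cancel_left₀ (rpow_pos_of_pos hb _).ne']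
    _ = (b ^ p)⁻¹ • ∫ t in Ioi 0, t ^ (p - 1) • g t := by
        rw [integral_smul, hscale, smul_smul, ← mul_inv, ← rpow_add_one hb.ne', sub_add_cancel]

end Substitution

section Radial

open Module

variable {E F : Type*} [NormedAddCommGroup E] [InnerProductSpace ℝ E] [FiniteDimensional ℝ E]
  [Nontrivial E] [MeasurableSpace E] [BorelSpace E] [NormedAddCommGroup F] [NormedSpace ℝ F]

theorem integral_fun_norm_sq (h : ℝ → F) :
    ∫ x : E, h (‖x‖ ^ 2) = (π ^ ((finrank ℝ E : ℝ) / 2) / Gamma ((finrank ℝ E : ℝ) / 2)) •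
      ∫ u in Ioi 0, u ^ ((finrank ℝ E : ℝ) / 2 - 1) • h u := by
  have hball : volume.real (Metric.ball (0 : E) 1) =
      π ^ ((finrank ℝ E : ℝ) / 2) / Gamma ((finrank ℝ E : ℝ) / 2 + 1) := by
    rw [measureReal_def, InnerProductSpace.volume_ball, ENNReal.ofReal_one, one_pow, one_mul,
      ENNReal.toReal_ofReal (by positivity), sqrt_eq_rpow, ← rpow_natCast, ← rpow_mul pi_pos.le]
    ring_nf
  set d : ℝ := (finrank ℝ E : ℝ) with hd_def
  have hd : 0 < d := by simpa [d] using finrank_pos (R := ℝ) (M := E)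
  have hradial : ∫ y in Ioi (0 : ℝ), y ^ (finrank ℝ E - 1) • h (y ^ 2)
      = ∫ y in Ioi (0 : ℝ), y ^ (d - 1) • h (y ^ (2 : ℝ)) := by
    refine setIntegral_congr_fun measurableSet_Ioi fun y (hy : 0 < y) => ?_
    rw [rpow_two, hd_def, ← Nat.cast_pred finrank_pos, rpow_natCast]
  rw [integral_fun_norm_addHaar volume (fun y => h (y ^ 2)), hradial,
    integral_rpow_smul_comp_rpow_Ioi two_pos, hball, Gamma_add_one (by positivity),
    ← Nat.cast_smul_eq_nsmul ℝ, smul_smul, smul_smul, ← hd_def]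
  congr 1
  field_simp

end Radial

section HurwitzLerch

variable {p c : ℝ}

theorem integrableOn_rpow_mul_exp_neg_mul_div_one_add_exp_rpow (hp : 0 < p) (hc : 0 < c)
    (w : ℝ) : IntegrableOn (fun t => t ^ (p - 1) * exp (-c * t) / (1 + exp (-t)) ^ w) (Ioi 0) := by
  have hdom : IntegrableOn (fun t => 2 ^ |w| * (t ^ (p - 1) * exp (-c * t))) (Ioi 0) := by
    have := integrableOn_rpow_mul_exp_neg_mul_rpow (s := p - 1) (by linarith) one_pos hc
    simp only [rpow_one] at this
    exact this.const_mul _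
  refine hdom.mono' (by fun_prop : Measurable _).aestronglyMeasurable ?_
  filter_upwards [ae_restrict_mem measurableSet_Ioi] with t (ht : 0 < t)
  have hbase : 1 ≤ 1 + exp (-t) := by linarith [exp_pos (-t)]
  have hbase' : 1 + exp (-t) ≤ 2 := by linarith [exp_le_one_iff.mpr (neg_nonpos.mpr ht.le)]
  have hfactor : ((1 + exp (-t)) ^ w)⁻¹ ≤ 2 ^ |w| := calc
    ((1 + exp (-t)) ^ w)⁻¹ = (1 + exp (-t)) ^ (-w) := (rpow_neg (by positivity) w).symm
    _ ≤ (1 + exp (-t)) ^ |w| := rpow_le_rpow_of_exponent_le hbase (neg_le_abs w)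
    _ ≤ 2 ^ |w| := rpow_le_rpow (by positivity) hbase' (abs_nonneg w)
  rw [norm_of_nonneg (by positivity), div_eq_mul_inv, mul_comm]
  exact mul_le_mul_of_nonneg_right hfactor (by positivity)

theorem integral_rpow_mul_exp_neg_mul_div_one_add_exp_rpow (hp : 0 < p) (c w : ℝ) :
    ∫ t in Ioi 0, t ^ (p - 1) * exp (-c * t) / (1 + exp (-t)) ^ w
      = Gamma p * PhiInt w (-1) p c := by
  rw [PhiInt, ← mul_assoc, one_div, mul_inv_cancel₀ (Gamma_pos_of_pos hp).ne', one_mul]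
  simp only [neg_one_mul, sub_neg_eq_add]

theorem PhiInt_neg_one_pos (hp : 0 < p) (hc : 0 < c) (w : ℝ) : 0 < PhiInt w (-1) p c := by
  have hpos : ∀ t ∈ Ioi (0 : ℝ), 0 < t ^ (p - 1) * exp (-c * t) / (1 + exp (-t)) ^ w :=
    fun t (ht : 0 < t) => by positivity
  have hint : 0 < ∫ t in Ioi 0, t ^ (p - 1) * exp (-c * t) / (1 + exp (-t)) ^ w := by
    rw [setIntegral_pos_iff_support_of_nonneg_ae
      ((ae_restrict_mem measurableSet_Ioi).mono fun t ht => (hpos t ht).le)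
      (integrableOn_rpow_mul_exp_neg_mul_div_one_add_exp_rpow hp hc w)]
    exact (by simp : 0 < volume (Ioi (0 : ℝ))).trans_le
      (measure_mono fun t ht => ⟨(hpos t ht).ne', ht⟩)
  rw [integral_rpow_mul_exp_neg_mul_div_one_add_exp_rpow hp] at hint
  exact pos_of_mul_pos_right hint (Gamma_pos_of_pos hp).le

end HurwitzLerch

theorem integral_rpow_mul_glGen {N a b s : ℝ} (hb : 0 < b) (hs : 0 < s) (r q : ℝ)
    (hp : 0 < 1 / s * (N + q - 1)) :
    ∫ u in Ioi 0, u ^ (q - 1) * glGen N a b s r u =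
      (s * b ^ (1 / s * (N + q - 1)))⁻¹ * Gamma (1 / s * (N + q - 1)) *
        PhiInt (2 * r) (-1) (1 / s * (N + q - 1)) (a / b) := by
  set p := 1 / s * (N + q - 1)
  set k : ℝ → ℝ := fun t => exp (-(a / b) * t) / (1 + exp (-t)) ^ (2 * r)
  calc ∫ u in Ioi 0, u ^ (q - 1) * glGen N a b s r u
      = ∫ u in Ioi 0, u ^ ((N + q - 1) - 1) * k (b * u ^ s) := by
        refine setIntegral_congr_fun measurableSet_Ioi fun u (hu : 0 < u) => ?_
        have hpow : u ^ (q - 1) * u ^ (N - 1) = u ^ ((N + q - 1) - 1) := by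
          rw [← rpow_add hu]
          ring_nf
        simp only [glGen, k, ← hpow]
        field_simp
    _ = s⁻¹ * ∫ v in Ioi 0, v ^ (p - 1) * k (b * v) := by
        have hsub := integral_rpow_smul_comp_rpow_Ioi hs (N + q - 1) fun v => k (b * v)
        rwa [show (N + q - 1) / s = p by simp only [p]; ring] at hsub
    _ = s⁻¹ * ((b ^ p)⁻¹ *
          ∫ t in Ioi 0, t ^ (p - 1) * exp (-(a / b) * t) / (1 + exp (-t)) ^ (2 * r)) := by
        congr 1
        simpa only [k, smul_eq_mul, mul_div_assoc] using
          integral_rpow_smul_comp_mul_left_Ioi p k hb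
    _ = _ := by
        rw [integral_rpow_mul_exp_neg_mul_div_one_add_exp_rpow hp, mul_inv]
        ring

theorem gl_normalizing_constant_general (n : ℕ) (hn : 0 < n) (N a b s r : ℝ)
    (ha : 0 < a) (hb : 0 < b) (hs : 0 < s) (hNn : 2 < 2 * N + n) :
    (Real.Gamma ((n : ℝ) / 2) / Real.pi ^ ((n : ℝ) / 2)) *
      (s * b ^ ((1 / s) * (N + (n : ℝ) / 2 - 1)) /
        Real.Gamma ((1 / s) * (N + (n : ℝ) / 2 - 1))) *
      (PhiInt (2 * r) (-1) ((1 / s) * (N + (n : ℝ) / 2 - 1)) (a / b))⁻¹ *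
      (∫ x : EuclideanSpace ℝ (Fin n), glGen N a b s r (‖x‖ ^ 2)) = 1 := by
  have : Nontrivial (EuclideanSpace ℝ (Fin n)) :=
    Module.nontrivial_of_finrank_pos (R := ℝ) (by simpa using hn)
  have hp : 0 < (1 / s) * (N + (n : ℝ) / 2 - 1) :=
    mul_pos (one_div_pos.mpr hs) (by linarith)
  have hΦ := PhiInt_neg_one_pos hp (div_pos ha hb) (2 * r)
  simp only [integral_fun_norm_sq, finrank_euclideanSpace_fin, smul_eq_mul]
  rw [integral_rpow_mul_glGen hb hs r _ hp]
  generalize 1 / s * (N + (n : ℝ) / 2 - 1) = p at *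
  field_simp

/-- The normalizing constant of the n-dimensional GL distribution (μ = 0, Σ = I):
C_n ∫_{ℝⁿ} g_n(‖x‖²) dx = 1 with the stated C_n. -/
theorem gl_normalizing_constant (n : ℕ) (hn : 0 < n) (N a b s r : ℝ)
    (ha : 0 < a) (hb : 0 < b) (hs : 0 < s) (hr : 0 ≤ r) (hNn : 2 < 2 * N + n) :
    (Real.Gamma ((n : ℝ) / 2) / Real.pi ^ ((n : ℝ) / 2)) *
      (s * b ^ ((1 / s) * (N + (n : ℝ) / 2 - 1)) /
        Real.Gamma ((1 / s) * (N + (n : ℝ) / 2 - 1))) *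
      (PhiInt (2 * r) (-1) ((1 / s) * (N + (n : ℝ) / 2 - 1)) (a / b))⁻¹ *
      (∫ x : EuclideanSpace ℝ (Fin n), glGen N a b s r (‖x‖ ^ 2)) = 1 :=
  gl_normalizing_constant_general n hn N a b s r ha hb hs hNn
end

section
/- For the n-dimensional logistic density generator g_n(t) = e^{-t}/(1 + e^{-t})², the m-dimensional marginal density generator ĝ_m(u) = ∫_u^∞ (t - u)^{(n-m)/2 - 1} g_n(t) dt equals Γ((n-m)/2) e^{-u} Φ*₂(-e^{-u}, (n-m)/2, 1) for all u > 0, where 1 ≤ m < n with n - m ≥ 1. -/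
open MeasureTheory Real Set

/-- Marginal density generator of the n-dimensional logistic generator. -/
theorem logistic_marginal_generator (n m : ℕ) (hm : 1 ≤ m) (hmn : m < n)
    (u : ℝ) (hu : 0 < u) :
    ∫ t in Ioi u, (t - u) ^ (((n : ℝ) - m) / 2 - 1) *
        (Real.exp (-t) / (1 + Real.exp (-t)) ^ 2)
      = Real.Gamma (((n : ℝ) - m) / 2) * Real.exp (-u) *
        PhiInt 2 (-Real.exp (-u)) (((n : ℝ) - m) / 2) 1 := by
  set s : ℝ := ((n : ℝ) - m) / 2 with hsdef
  have hspos : 0 < s := by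
    have : (m : ℝ) < n := by exact_mod_cast hmn
    have : 0 < (n : ℝ) - m := by linarith
    positivity
  have hΓ : Real.Gamma s ≠ 0 := (Real.Gamma_pos_of_pos hspos).ne'
  unfold PhiInt
  -- shift the LHS integral
  have hshift :
      (∫ t in Ioi u, (t - u) ^ (s - 1) * (Real.exp (-t) / (1 + Real.exp (-t)) ^ 2))
        = ∫ t in Ioi (0:ℝ),
            (t : ℝ) ^ (s - 1) * (Real.exp (-(t + u)) / (1 + Real.exp (-(t + u))) ^ 2) := by
    have h := (measurePreserving_add_right (volume : Measure ℝ) u).setIntegral_preimage_emb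
      (measurableEmbedding_addRight u)
      (fun t => (t - u) ^ (s - 1) * (Real.exp (-t) / (1 + Real.exp (-t)) ^ 2)) (Ioi u)
    have hpre : (fun x : ℝ => x + u) ⁻¹' Ioi u = Ioi 0 := by
      ext x; simp [lt_add_iff_pos_left]
    rw [hpre] at h
    rw [← h]
    refine setIntegral_congr_fun measurableSet_Ioi fun t ht => ?_
    simp
  rw [hshift]
  rw [mul_assoc, ← mul_assoc (Real.Gamma s), mul_comm (Real.Gamma s), mul_assoc,
    ← mul_assoc (Real.Gamma s), mul_one_div_cancel hΓ, one_mul, ← integral_const_mul]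
  refine setIntegral_congr_fun measurableSet_Ioi fun t ht => ?_
  have ht0 : 0 < t := ht
  have he : Real.exp (-(t + u)) = Real.exp (-u) * Real.exp (-t) := by
    rw [← Real.exp_add]; ring_nf
  have hb : (1 : ℝ) - -Real.exp (-u) * Real.exp (-t) = 1 + Real.exp (-(t + u)) := by
    rw [he]; ring
  have hbpos : (0:ℝ) < 1 + Real.exp (-(t + u)) := by positivity
  rw [neg_mul, one_mul, hb, show (2:ℝ) = ((2:ℕ):ℝ) by norm_num,
    Real.rpow_natCast]
  rw [he]
  field_simp
end

section
/- Let g_n(t) = t^{N-1} e^{-a t}/(1 + e^{-b t})^{2r} with N a positive integer, a, b > 0, r ≥ 0, and let 1 ≤ m < n. Then the marginal density generator ĝ_m(u) = ∫_u^∞ (t-u)^{(n-m)/2 - 1} g_n(t) dt equals ∑_{j=0}^{N-1} binom(N-1,j) u^{N-1-j} e^{-au} · Γ((n-m)/2 + j)/b^{(n-m)/2 + j} · Φ*_{2r}(-e^{-bu}, (n-m)/2 + j, a/b) for every u > 0. -/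
open MeasureTheory Real Set

/-!
Write `t = u + x` and expand `(u + x)^(N-1)` binomially. Since `e^{-bt} = e^{-bu} e^{-bx}`, each of
the `N` resulting integrals becomes, after rescaling `x` by `b`, the integral representation of
`Φ*_{2r}(z, (n-m)/2 + j, a/b)` with `z = -e^{-bu}`.
-/

theorem setIntegral_Ioi_eq_setIntegral_Ioi_zero_add {E : Type*} [NormedAddCommGroup E]
    [NormedSpace ℝ E] (f : ℝ → E) (u : ℝ) :
    ∫ t in Ioi u, f t = ∫ x in Ioi (0:ℝ), f (x + u) := by
  rw [← integral_indicator measurableSet_Ioi, ← integral_indicator measurableSet_Ioi,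
    ← integral_add_right_eq_self (fun t => (Ioi u).indicator f t) u]
  congr 1 with x
  simp [indicator, lt_add_iff_pos_left]

theorem gamma_div_rpow_mul_phiInt {s b : ℝ} (hs : 0 < s) (hb : 0 < b) (v z a : ℝ) :
    Real.Gamma s / b ^ s * PhiInt v z s (a / b)
      = ∫ x in Ioi (0:ℝ), x ^ (s - 1) * Real.exp (-a * x) / (1 - z * Real.exp (-b * x)) ^ v := by
  have hrescale : ∫ x in Ioi (0:ℝ), (b * x) ^ (s - 1) * Real.exp (-(a / b) * (b * x)) /
        (1 - z * Real.exp (-(b * x))) ^ v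
      = b ^ (s - 1) * ∫ x in Ioi (0:ℝ),
          x ^ (s - 1) * Real.exp (-a * x) / (1 - z * Real.exp (-b * x)) ^ v := by
    rw [← integral_const_mul]
    refine setIntegral_congr_fun measurableSet_Ioi fun x (hx : 0 < x) => ?_
    have hexponent : -(a / b) * (b * x) = -a * x := by field_simp
    rw [mul_rpow hb.le hx.le, hexponent, neg_mul b]
    ring
  have hsubst := integral_comp_mul_left_Ioi'
    (fun t => t ^ (s - 1) * Real.exp (-(a / b) * t) / (1 - z * Real.exp (-t)) ^ v) 0 hb
  rw [mul_zero, hrescale, smul_eq_mul, ← mul_assoc] at hsubst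
  have hbs : b ^ s = b * b ^ (s - 1) := by
    rw [← rpow_one_add' hb.le (by simp [hs.ne'])]
    ring_nf
  rw [PhiInt, ← hsubst, ← hbs]
  generalize (∫ x in Ioi (0:ℝ), _ : ℝ) = J
  field_simp [(Real.Gamma_pos_of_pos hs).ne']

theorem integrableOn_rpow_mul_exp_div_one_sub_mul_exp_rpow {s a b z : ℝ} (hs : 0 < s)
    (ha : 0 < a) (hb : 0 ≤ b) (hz : z ≤ 0) (v : ℝ) :
    IntegrableOn (fun x : ℝ => x ^ (s - 1) * Real.exp (-a * x) /
      (1 - z * Real.exp (-b * x)) ^ v) (Ioi 0) := by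
  have hgamma : IntegrableOn (fun x : ℝ => x ^ (s - 1) * Real.exp (-a * x)) (Ioi 0) := by
    simpa using integrableOn_rpow_mul_exp_neg_mul_rpow (p := 1) (by linarith) one_pos ha
  refine (hgamma.mul_const ((1 - z) ^ |v|)).mono'
    (Measurable.aestronglyMeasurable (by fun_prop)) ?_
  filter_upwards [ae_restrict_mem measurableSet_Ioi] with x (hx : 0 < x)
  set y := 1 - z * Real.exp (-b * x)
  have hexp_le : Real.exp (-b * x) ≤ 1 := exp_le_one_iff.mpr (by nlinarith)
  have hy_one : 1 ≤ y := by nlinarith [Real.exp_pos (-b * x)]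
  have hy_le : y ≤ 1 - z := by nlinarith
  have hfactor : (y ^ v)⁻¹ ≤ (1 - z) ^ |v| :=
    calc (y ^ v)⁻¹ = y ^ (-v) := (rpow_neg (by linarith) v).symm
      _ ≤ y ^ |v| := rpow_le_rpow_of_exponent_le hy_one (neg_le_abs v)
      _ ≤ (1 - z) ^ |v| := rpow_le_rpow (by linarith) hy_le (abs_nonneg v)
  rw [norm_of_nonneg (by positivity), div_eq_mul_inv]
  gcongr

theorem rpow_mul_add_pow_eq_sum {x : ℝ} (hx : 0 < x) (s u : ℝ) (k : ℕ) :
    x ^ (s - 1) * (x + u) ^ k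
      = ∑ j ∈ Finset.range (k + 1), (k.choose j : ℝ) * u ^ (k - j) * x ^ (s + j - 1) := by
  rw [add_pow, Finset.mul_sum]
  refine Finset.sum_congr rfl fun j _ => ?_
  rw [add_sub_right_comm, rpow_add hx, rpow_natCast]
  ring

theorem rpow_mul_glGenerator_add_eq_sum {x : ℝ} (hx : 0 < x) (s a b u v : ℝ) (k : ℕ) :
    x ^ (s - 1) * ((x + u) ^ k * Real.exp (-a * (x + u)) / (1 + Real.exp (-b * (x + u))) ^ v)
      = ∑ j ∈ Finset.range (k + 1), (k.choose j : ℝ) * u ^ (k - j) * Real.exp (-a * u) *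
          (x ^ (s + j - 1) * Real.exp (-a * x) /
            (1 - -Real.exp (-b * u) * Real.exp (-b * x)) ^ v) := by
  have hexp : Real.exp (-a * (x + u)) = Real.exp (-a * u) * Real.exp (-a * x) := by
    rw [← Real.exp_add]; ring_nf
  have hdenom : 1 - -Real.exp (-b * u) * Real.exp (-b * x) = 1 + Real.exp (-b * (x + u)) := by
    rw [neg_mul, sub_neg_eq_add, ← Real.exp_add]; ring_nf
  rw [hdenom, hexp, ← mul_div_assoc, ← mul_assoc, ← mul_assoc, rpow_mul_add_pow_eq_sum hx,
    Finset.sum_mul, Finset.sum_mul, Finset.sum_div]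
  refine Finset.sum_congr rfl fun j _ => ?_
  ring

theorem gl_marginal_generator_general (n m N : ℕ) (hmn : m < n) (hN : 0 < N)
    (a b r : ℝ) (ha : 0 < a) (hb : 0 < b) (u : ℝ) :
    ∫ t in Ioi u, (t - u) ^ (((n : ℝ) - m) / 2 - 1) *
        (t ^ (N - 1) * Real.exp (-a * t) / (1 + Real.exp (-b * t)) ^ (2 * r))
      = ∑ j ∈ Finset.range N,
          (Nat.choose (N - 1) j : ℝ) * u ^ (N - 1 - j) * Real.exp (-a * u) *
            (Real.Gamma (((n : ℝ) - m) / 2 + j) / b ^ (((n : ℝ) - m) / 2 + (j : ℝ))) *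
            PhiInt (2 * r) (-Real.exp (-b * u)) (((n : ℝ) - m) / 2 + j) (a / b) := by
  set s : ℝ := ((n : ℝ) - m) / 2
  have hs : ∀ j : ℕ, 0 < s + j := fun j => by
    have : (m : ℝ) < n := by exact_mod_cast hmn
    positivity
  have hexpand : EqOn
      (fun x => (x + u - u) ^ (s - 1) *
        ((x + u) ^ (N - 1) * Real.exp (-a * (x + u)) / (1 + Real.exp (-b * (x + u))) ^ (2 * r)))
      (fun x => ∑ j ∈ Finset.range N, (Nat.choose (N - 1) j : ℝ) * u ^ (N - 1 - j) *
        Real.exp (-a * u) * (x ^ (s + j - 1) * Real.exp (-a * x) /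
          (1 - -Real.exp (-b * u) * Real.exp (-b * x)) ^ (2 * r)))
      (Ioi 0) := fun x (hx : 0 < x) => by
    dsimp only
    rw [add_sub_cancel_right, rpow_mul_glGenerator_add_eq_sum hx, Nat.sub_add_cancel hN]
  rw [setIntegral_Ioi_eq_setIntegral_Ioi_zero_add, setIntegral_congr_fun measurableSet_Ioi hexpand,
    integral_finsetSum _ fun j _ => (integrableOn_rpow_mul_exp_div_one_sub_mul_exp_rpow (hs j)
      ha hb.le (neg_nonpos.mpr (Real.exp_pos _).le) _).const_mul _]
  refine Finset.sum_congr rfl fun j _ => ?_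
  rw [integral_const_mul, ← gamma_div_rpow_mul_phiInt (hs j) hb]
  ring

/-- Marginal density generator of the GL generator g_n(t) = t^{N-1}e^{-at}/(1+e^{-bt})^{2r}. -/
theorem gl_marginal_generator (n m N : ℕ) (hm : 1 ≤ m) (hmn : m < n) (hN : 0 < N)
    (a b r : ℝ) (ha : 0 < a) (hb : 0 < b) (hr : 0 ≤ r) (u : ℝ) (hu : 0 < u) :
    ∫ t in Ioi u, (t - u) ^ (((n : ℝ) - m) / 2 - 1) *
        (t ^ (N - 1) * Real.exp (-a * t) / (1 + Real.exp (-b * t)) ^ (2 * r))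
      = ∑ j ∈ Finset.range N,
          (Nat.choose (N - 1) j : ℝ) * u ^ (N - 1 - j) * Real.exp (-a * u) *
            (Real.Gamma (((n : ℝ) - m) / 2 + j) / b ^ (((n : ℝ) - m) / 2 + (j : ℝ))) *
            PhiInt (2 * r) (-Real.exp (-b * u)) (((n : ℝ) - m) / 2 + j) (a / b) :=
  gl_marginal_generator_general n m N hmn hN a b r ha hb u
end

section
/- Let R ≥ 0 be a random variable with density f_R(v) = v^{n-1} g(v²) / ∫_0^∞ t^{n-1} g(t²) dt where g(t) = t^{N-1} e^{-a t^s}/(1 + e^{-b t^s})^{2r}, with 2N + n > 2, a, b, s > 0, r ≥ 0. Then for every real p > 0, E(R^p) = [Γ((1/s)(N + n/2 + p/2 - 1)) Φ*_{2r}(-1, (1/s)(N + n/2 + p/2 - 1), a/b)] / [b^{p/(2s)} Γ((1/s)(N + n/2 - 1)) Φ*_{2r}(-1, (1/s)(N + n/2 - 1), a/b)]. -/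
open MeasureTheory Real Set

/-!
The substitution `u = b v^{2s}` turns `∫₀^∞ v^{c-1} g(v²) dv` into
`b^{-σ}/(2s) · ∫₀^∞ u^{σ-1} e^{-(a/b)u} / (1 + e^{-u})^{2r} du` with `σ = (c + 2N - 2)/(2s)`,
and the last integral is `Γ(σ) Φ*_{2r}(-1, σ, a/b)`. Taking `c = n + p` and `c = n` and dividing,
the powers of `b` combine to `b^{-p/(2s)}`.
-/

lemma Gamma_mul_PhiInt {σ : ℝ} (hσ : Gamma σ ≠ 0) (v z k : ℝ) :
    Gamma σ * PhiInt v z σ k =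
      ∫ t in Ioi (0:ℝ), t ^ (σ - 1) * exp (-k * t) / (1 - z * exp (-t)) ^ v := by
  rw [PhiInt, ← mul_assoc, mul_one_div_cancel hσ, one_mul]

lemma integrableOn_PhiInt_integrand {v z σ k : ℝ} (hv : 0 ≤ v) (hz : z ≤ 0) (hσ : 0 < σ)
    (hk : 0 < k) :
    IntegrableOn (fun t : ℝ => t ^ (σ - 1) * exp (-k * t) / (1 - z * exp (-t)) ^ v) (Ioi 0) := by
  have hdom : IntegrableOn (fun t : ℝ => t ^ (σ - 1) * exp (-k * t)) (Ioi 0) := by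
    simpa using integrableOn_rpow_mul_exp_neg_mul_rpow (p := 1) (by linarith) one_pos hk
  refine hdom.mono' (Measurable.aestronglyMeasurable (by fun_prop)) ?_
  filter_upwards [self_mem_ae_restrict measurableSet_Ioi] with t (ht : 0 < t)
  have hden : 1 ≤ (1 - z * exp (-t)) ^ v := one_le_rpow (by nlinarith [exp_pos (-t)]) hv
  have hnum : 0 ≤ t ^ (σ - 1) * exp (-k * t) := by positivity
  rw [norm_of_nonneg (div_nonneg hnum (by linarith))]
  exact div_le_self hnum hden

lemma PhiInt_pos {v z σ k : ℝ} (hv : 0 ≤ v) (hz : z ≤ 0) (hσ : 0 < σ) (hk : 0 < k) :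
    0 < PhiInt v z σ k := by
  have hpos : ∀ t ∈ Ioi (0:ℝ), 0 < t ^ (σ - 1) * exp (-k * t) / (1 - z * exp (-t)) ^ v := by
    intro t (ht : 0 < t)
    have : 0 < 1 - z * exp (-t) := by nlinarith [exp_pos (-t)]
    positivity
  have hint : 0 < ∫ t in Ioi (0:ℝ), t ^ (σ - 1) * exp (-k * t) / (1 - z * exp (-t)) ^ v := by
    rw [setIntegral_pos_iff_support_of_nonneg_ae
      ((ae_restrict_iff' measurableSet_Ioi).mpr (.of_forall fun t ht => (hpos t ht).le))
      (integrableOn_PhiInt_integrand hv hz hσ hk),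
      inter_eq_right.mpr fun t ht => Function.mem_support.mpr (hpos t ht).ne']
    simp
  exact mul_pos (one_div_pos.mpr (Gamma_pos_of_pos hσ)) hint

lemma integral_rpow_mul_glGen_sq {N a b s r c σ : ℝ} (hb : 0 < b) (hs : 0 < s) (hσ : 0 < σ)
    (hc : 2 * s * σ = c + 2 * N - 2) :
    ∫ v in Ioi (0:ℝ), v ^ (c - 1) * glGen N a b s r (v ^ 2) =
      b ^ (-σ) / (2 * s) * (Gamma σ * PhiInt (2 * r) (-1) σ (a / b)) := by
  set F : ℝ → ℝ := fun u => u ^ (σ - 1) * exp (-(a / b) * u) / (1 - -1 * exp (-u)) ^ (2 * r)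
  have hs2 : 0 < 2 * s := by linarith
  have hpt : ∀ v ∈ Ioi (0:ℝ), v ^ (c - 1) * glGen N a b s r (v ^ 2) =
      b ^ (1 - σ) / (2 * s) * ((|2 * s| * v ^ (2 * s - 1)) • F (b * v ^ (2 * s))) := by
    intro v (hv : 0 < v)
    have hsq (x : ℝ) : (v ^ 2) ^ x = v ^ (2 * x) := by
      rw [← rpow_natCast, ← rpow_mul hv.le]; norm_num
    have hbw : (b * v ^ (2 * s)) ^ (σ - 1) = b ^ (σ - 1) * v ^ (2 * s * (σ - 1)) := by
      rw [mul_rpow hb.le (by positivity), ← rpow_mul hv.le]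
    have hpow : v ^ (c - 1) * v ^ (2 * (N - 1)) = v ^ (2 * s - 1) * v ^ (2 * s * (σ - 1)) := by
      rw [← rpow_add hv, ← rpow_add hv]; congr 1; linarith
    have hb1 : b ^ (1 - σ) * b ^ (σ - 1) = 1 := by rw [← rpow_add hb]; simp
    simp only [glGen, F, smul_eq_mul, abs_of_pos hs2, hsq, hbw, sub_neg_eq_add, neg_mul]
    field_simp
    linear_combination hpow - v ^ (2 * s - 1) * v ^ (2 * s * (σ - 1)) * hb1
  rw [setIntegral_congr_fun measurableSet_Ioi hpt, integral_const_mul,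
    integral_comp_rpow_Ioi (fun w => F (b * w)) hs2.ne', integral_comp_mul_left_Ioi F 0 hb,
    mul_zero, Gamma_mul_PhiInt (Gamma_pos_of_pos hσ).ne', smul_eq_mul]
  have hbσ : b ^ (1 - σ) * b⁻¹ = b ^ (-σ) := by
    rw [← rpow_neg_one, ← rpow_add hb]; ring_nf
  rw [← hbσ]
  ring

theorem radial_moment_general (n : ℕ) (N a b s r p : ℝ)
    (ha : 0 < a) (hb : 0 < b) (hs : 0 < s) (hr : 0 ≤ r) (hp : 0 < p)
    (hNn : 2 < 2 * N + n) :
    (∫ v in Ioi (0:ℝ), v ^ p * (v ^ ((n : ℝ) - 1) * glGen N a b s r (v ^ 2))) /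
        (∫ t in Ioi (0:ℝ), t ^ ((n : ℝ) - 1) * glGen N a b s r (t ^ 2))
      = Real.Gamma ((1 / s) * (N + (n : ℝ) / 2 + p / 2 - 1)) *
          PhiInt (2 * r) (-1) ((1 / s) * (N + (n : ℝ) / 2 + p / 2 - 1)) (a / b) /
          (b ^ (p / (2 * s)) * Real.Gamma ((1 / s) * (N + (n : ℝ) / 2 - 1)) *
            PhiInt (2 * r) (-1) ((1 / s) * (N + (n : ℝ) / 2 - 1)) (a / b)) := by
  set σ₁ := (1 / s) * (N + (n : ℝ) / 2 + p / 2 - 1) with hσ₁_def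
  set σ₀ := (1 / s) * (N + (n : ℝ) / 2 - 1) with hσ₀_def
  have hσ₀ : 0 < σ₀ := mul_pos (by positivity) (by linarith)
  have hσ₁ : 0 < σ₁ := mul_pos (by positivity) (by linarith)
  have hmoment : ∫ v in Ioi (0:ℝ), v ^ p * (v ^ ((n : ℝ) - 1) * glGen N a b s r (v ^ 2)) =
      ∫ v in Ioi (0:ℝ), v ^ (p + n - 1) * glGen N a b s r (v ^ 2) :=
    setIntegral_congr_fun measurableSet_Ioi fun v (hv : 0 < v) => by
      rw [add_sub_assoc, rpow_add hv, mul_assoc]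
  rw [hmoment, integral_rpow_mul_glGen_sq hb hs hσ₁ (by rw [hσ₁_def]; field_simp; ring),
    integral_rpow_mul_glGen_sq hb hs hσ₀ (by rw [hσ₀_def]; field_simp; ring)]
  have hbσ : b ^ (-σ₁) = b ^ (-σ₀) / b ^ (p / (2 * s)) := by
    rw [← rpow_sub hb, hσ₁_def, hσ₀_def]; congr 1; field_simp; ring
  have hΦ := PhiInt_pos (by linarith : 0 ≤ 2 * r) (by norm_num : (-1:ℝ) ≤ 0) hσ₀ (div_pos ha hb)
  have hΓ := Gamma_pos_of_pos hσ₀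
  rw [hbσ]
  field_simp

/-- Moments of the radial variable R with density ∝ v^{n-1} g(v²) on (0,∞). -/
theorem radial_moment (n : ℕ) (hn : 0 < n) (N a b s r p : ℝ)
    (ha : 0 < a) (hb : 0 < b) (hs : 0 < s) (hr : 0 ≤ r) (hp : 0 < p)
    (hNn : 2 < 2 * N + n) :
    (∫ v in Ioi (0:ℝ), v ^ p * (v ^ ((n : ℝ) - 1) * glGen N a b s r (v ^ 2))) /
        (∫ t in Ioi (0:ℝ), t ^ ((n : ℝ) - 1) * glGen N a b s r (t ^ 2))
      = Real.Gamma ((1 / s) * (N + (n : ℝ) / 2 + p / 2 - 1)) *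
          PhiInt (2 * r) (-1) ((1 / s) * (N + (n : ℝ) / 2 + p / 2 - 1)) (a / b) /
          (b ^ (p / (2 * s)) * Real.Gamma ((1 / s) * (N + (n : ℝ) / 2 - 1)) *
            PhiInt (2 * r) (-1) ((1 / s) * (N + (n : ℝ) / 2 - 1)) (a / b)) :=
  radial_moment_general n N a b s r p ha hb hs hr hp hNn
end

section
/- Let the bivariate GL distribution have μ = 0, Σ = [[1, ρ'],[ρ', 1]] with |ρ'| < 1, and density generator g₂(t) = t^{N-1} e^{-at}/(1 + e^{-bt})^{2r} (s = 1). Then Cov(X,Y) = (N/(2b)) · Φ*_{2r}(-1, N+1, a/b)/Φ*_{2r}(-1, N, a/b) · ρ'. -/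
/-!
Writing `Σ = M Mᵀ` with `M = corrSqrt ρ`, the substitution `x = M y` cancels the factor
`√(det Σ) = |det M|` and turns the density into the radial function `C₂ g(‖y‖²)`. In polar
coordinates the weight `x₀ x₁` becomes `R² (ρ + cos 2θ) / 2`, so the angular integral leaves `ρ π`
and the covariance is `ρ/2 · E(R²)` with `E(R²) = ∫ t g(t) dt / ∫ g(t) dt`. The substitution
`t ↦ b t` turns both radial integrals into `b^(-s) Γ(s) Φ*_{2r}(-1, s, a/b)` for `s = N + 1` and
`s = N`, and `Γ(N + 1) = N Γ(N)`.
-/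

open MeasureTheory Real Set Matrix

theorem integral_eq_abs_det_smul_integral_comp {E F : Type*} [NormedAddCommGroup E]
    [NormedSpace ℝ E] [FiniteDimensional ℝ E] [MeasurableSpace E] [BorelSpace E]
    [NormedAddCommGroup F] [NormedSpace ℝ F] (μ : Measure E) [μ.IsAddHaarMeasure]
    (T : E →L[ℝ] E) (hT : T.det ≠ 0) (G : E → F) :
    ∫ x, G x ∂μ = |T.det| • ∫ x, G (T x) ∂μ := by
  have hbij : Function.Bijective T :=
    (Module.End.isUnit_iff _).mp <| (LinearMap.isUnit_iff_isUnit_det _).mpr hT.isUnit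
  have key := integral_image_eq_integral_abs_det_fderiv_smul μ MeasurableSet.univ
    (fun x _ => T.hasFDerivAt.hasFDerivWithinAt) hbij.injective.injOn G
  rwa [image_univ, hbij.surjective.range_eq, setIntegral_univ, setIntegral_univ,
    integral_smul] at key

section EllipticalChangeOfVariables

variable {n : Type*} [Fintype n] [DecidableEq n] (M : Matrix n n ℝ) (hM : M.det ≠ 0)
include hM

theorem dotProduct_inv_mul_transpose_mulVec (y : n → ℝ) :
    M *ᵥ y ⬝ᵥ (M * Mᵀ)⁻¹ *ᵥ (M *ᵥ y) = y ⬝ᵥ y := by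
  have hMt : IsUnit Mᵀ.det := by rw [det_transpose]; exact hM.isUnit
  rw [Matrix.mul_inv_rev, mulVec_mulVec, Matrix.mul_assoc, nonsing_inv_mul _ hM.isUnit,
    Matrix.mul_one, dotProduct_comm, dotProduct_mulVec, ← mulVec_transpose, mulVec_mulVec,
    mul_nonsing_inv _ hMt, one_mulVec]

theorem integral_comp_quadForm_inv_mul_transpose (g : ℝ → ℝ) (w : (n → ℝ) → ℝ) :
    ∫ x, g (x ⬝ᵥ (M * Mᵀ)⁻¹ *ᵥ x) * w x = |M.det| * ∫ y, g (y ⬝ᵥ y) * w (M *ᵥ y) := by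
  have hdet : (LinearMap.toContinuousLinearMap (toLin' M)).det = M.det := LinearMap.det_toLin' M
  rw [integral_eq_abs_det_smul_integral_comp volume _ (hdet ▸ hM), hdet, smul_eq_mul]
  simp only [LinearMap.coe_toContinuousLinearMap', toLin'_apply,
    dotProduct_inv_mul_transpose_mulVec M hM]

end EllipticalChangeOfVariables

theorem integral_Ioi_pow_mul_comp_sq (m : ℕ) (g : ℝ → ℝ) :
    ∫ r in Ioi (0:ℝ), r ^ (2 * m + 1) * g (r ^ 2) = 1 / 2 * ∫ t in Ioi (0:ℝ), t ^ m * g t := by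
  rw [← integral_comp_rpow_Ioi_of_pos (g := fun t => t ^ m * g t) two_pos,
    ← integral_const_mul]
  refine setIntegral_congr_fun measurableSet_Ioi fun r _ => ?_
  rw [smul_eq_mul, rpow_two, show (2:ℝ) - 1 = 1 by norm_num, rpow_one]
  ring

theorem integral_radial_mul_homogeneous (g : ℝ → ℝ) (h : (Fin 2 → ℝ) → ℝ) (ψ : ℝ → ℝ) (m : ℕ)
    (hh : ∀ r θ, h ![r * cos θ, r * sin θ] = r ^ (2 * m) * ψ θ) :
    ∫ y : Fin 2 → ℝ, g (y ⬝ᵥ y) * h y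
      = (1 / 2 * ∫ t in Ioi (0:ℝ), t ^ m * g t) * ∫ θ in Ioo (-π) π, ψ θ := by
  have hprod := (volume_preserving_finTwoArrow ℝ).symm.integral_comp
    MeasurableEquiv.finTwoArrow.symm.measurableEmbedding fun y => g (y ⬝ᵥ y) * h y
  rw [← hprod, ← integral_comp_polarCoord_symm, ← integral_Ioi_pow_mul_comp_sq,
    ← setIntegral_prod_mul, Measure.volume_eq_prod]
  refine setIntegral_congr_fun (measurableSet_Ioi.prod measurableSet_Ioo) fun p _ => ?_
  have hsq : (p.1 * cos p.2) ^ 2 + (p.1 * sin p.2) ^ 2 = p.1 ^ 2 := by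
    linear_combination p.1 ^ 2 * sin_sq_add_cos_sq p.2
  simp only [dotProduct, polarCoord_symm_apply, MeasurableEquiv.finTwoArrow_symm_apply,
    finZeroElim_eq_zero, zero_empty, Fin.cons_vecEmpty, Fin.cons_vecCons, Fin.sum_univ_two,
    Fin.isValue, cons_val_zero, cons_val_one, ← sq, hsq, hh, smul_eq_mul]
  ring

theorem integral_Ioo_neg_pi_pi_const_add_cos_two_mul (c : ℝ) :
    ∫ θ in Ioo (-π) π, (c + cos (2 * θ)) / 2 = c * π := by
  rw [← integral_Ioc_eq_integral_Ioo, ← intervalIntegral.integral_of_le (by linarith [pi_pos]),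
    intervalIntegral.integral_div, intervalIntegral.integral_add intervalIntegrable_const
      ((by fun_prop : Continuous fun θ => cos (2 * θ)).intervalIntegrable _ _),
    intervalIntegral.integral_comp_mul_left cos two_ne_zero, integral_cos,
    intervalIntegral.integral_const, mul_neg, sin_neg, sin_two_pi]
  simp only [smul_eq_mul]
  ring

noncomputable def corrSqrt (ρ : ℝ) : Matrix (Fin 2) (Fin 2) ℝ :=
  !![√((1 + ρ) / 2), √((1 - ρ) / 2); √((1 + ρ) / 2), -√((1 - ρ) / 2)]

section CorrSqrt

variable {ρ : ℝ} (hρ : |ρ| ≤ 1)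
include hρ

theorem corrSqrt_mul_transpose : corrSqrt ρ * (corrSqrt ρ)ᵀ = !![1, ρ; ρ, 1] := by
  obtain ⟨h1, h2⟩ := abs_le.mp hρ
  have hα := sq_sqrt (by linarith : 0 ≤ (1 + ρ) / 2)
  have hβ := sq_sqrt (by linarith : 0 ≤ (1 - ρ) / 2)
  unfold corrSqrt
  generalize √((1 + ρ) / 2) = α at hα ⊢
  generalize √((1 - ρ) / 2) = β at hβ ⊢
  ext i j
  fin_cases i <;> fin_cases j <;>
    simp only [Fin.zero_eta, Fin.mk_one, Fin.isValue, mul_apply, of_apply, cons_val',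
      cons_val_fin_one, cons_val_zero, cons_val_one, transpose_apply, Fin.sum_univ_two, ← sq,
      mul_neg, neg_mul, even_two, Even.neg_pow] <;>
    linarith

theorem det_corrSqrt : (corrSqrt ρ).det = -√(1 - ρ ^ 2) := by
  obtain ⟨h1, h2⟩ := abs_le.mp hρ
  have hα := sq_sqrt (by linarith : 0 ≤ (1 + ρ) / 2)
  have hβ := sq_sqrt (by linarith : 0 ≤ (1 - ρ) / 2)
  have hα0 := sqrt_nonneg ((1 + ρ) / 2)
  have hβ0 := sqrt_nonneg ((1 - ρ) / 2)
  unfold corrSqrt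
  generalize √((1 + ρ) / 2) = α at hα hα0 ⊢
  generalize √((1 - ρ) / 2) = β at hβ hβ0 ⊢
  rw [det_fin_two_of, show 1 - ρ ^ 2 = (2 * α * β) ^ 2 by
    linear_combination -4 * β ^ 2 * hα - (1 + ρ) * 2 * hβ, sqrt_sq (by positivity)]
  ring

theorem corrSqrt_mulVec_zero_mul_one (p q : ℝ) :
    (corrSqrt ρ *ᵥ ![p, q]) 0 * (corrSqrt ρ *ᵥ ![p, q]) 1
      = ((1 + ρ) * p ^ 2 - (1 - ρ) * q ^ 2) / 2 := by
  obtain ⟨h1, h2⟩ := abs_le.mp hρ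
  have hα := sq_sqrt (by linarith : 0 ≤ (1 + ρ) / 2)
  have hβ := sq_sqrt (by linarith : 0 ≤ (1 - ρ) / 2)
  unfold corrSqrt
  generalize √((1 + ρ) / 2) = α at hα ⊢
  generalize √((1 - ρ) / 2) = β at hβ ⊢
  simp only [mulVec, Fin.isValue, of_apply, cons_val', cons_val_fin_one, cons_val_zero,
    cons_val_one, vec2_dotProduct, neg_mul]
  linear_combination p ^ 2 * hα - q ^ 2 * hβ

theorem abs_det_corrSqrt : |(corrSqrt ρ).det| = √(1 - ρ ^ 2) := by
  rw [det_corrSqrt hρ, abs_neg, abs_of_nonneg (sqrt_nonneg _)]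

end CorrSqrt

section CorrelationMoments

variable {ρ : ℝ} (hρ : |ρ| < 1) (g : ℝ → ℝ)
include hρ

theorem sqrt_one_sub_sq_pos : 0 < √(1 - ρ ^ 2) :=
  sqrt_pos.mpr (by nlinarith [abs_lt.mp hρ])

theorem det_corrSqrt_ne_zero : (corrSqrt ρ).det ≠ 0 := by
  rw [det_corrSqrt hρ.le]
  exact neg_ne_zero.mpr (sqrt_one_sub_sq_pos hρ).ne'

theorem integral_comp_quadForm_corr :
    ∫ x : Fin 2 → ℝ, g (x ⬝ᵥ !![1, ρ; ρ, 1]⁻¹ *ᵥ x)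
      = π * √(1 - ρ ^ 2) * ∫ t in Ioi (0:ℝ), g t := by
  have h := integral_comp_quadForm_inv_mul_transpose _ (det_corrSqrt_ne_zero hρ) g fun _ => 1
  have hrad := integral_radial_mul_homogeneous g (fun _ => 1) (fun _ => 1) 0 (by simp)
  simp only [mul_one, corrSqrt_mul_transpose hρ.le] at h hrad
  rw [h, hrad, abs_det_corrSqrt hρ.le, setIntegral_const,
    volume_real_Ioo_of_le (by linarith [pi_pos])]
  simp only [smul_eq_mul, sub_neg_eq_add, pow_zero, one_mul, mul_one]
  ring

theorem integral_comp_quadForm_corr_mul_mul :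
    ∫ x : Fin 2 → ℝ, g (x ⬝ᵥ !![1, ρ; ρ, 1]⁻¹ *ᵥ x) * (x 0 * x 1)
      = π * ρ * √(1 - ρ ^ 2) / 2 * ∫ t in Ioi (0:ℝ), t * g t := by
  have hh (r θ : ℝ) : (corrSqrt ρ *ᵥ ![r * cos θ, r * sin θ]) 0
      * (corrSqrt ρ *ᵥ ![r * cos θ, r * sin θ]) 1 = r ^ (2 * 1) * ((ρ + cos (2 * θ)) / 2) := by
    rw [corrSqrt_mulVec_zero_mul_one hρ.le, cos_two_mul]
    linear_combination r ^ 2 * (ρ - 1) / 2 * sin_sq_add_cos_sq θ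
  have h := integral_comp_quadForm_inv_mul_transpose _ (det_corrSqrt_ne_zero hρ) g
    fun x => x 0 * x 1
  rw [corrSqrt_mul_transpose hρ.le] at h
  rw [h, integral_radial_mul_homogeneous g _ _ 1 hh, abs_det_corrSqrt hρ.le,
    integral_Ioo_neg_pi_pi_const_add_cos_two_mul]
  simp only [pow_one]
  ring

theorem integral_mul_mul_eq_of_corr_elliptical {C : ℝ}
    (hnorm : ∫ x : Fin 2 → ℝ, C / √(1 - ρ ^ 2) * g (x ⬝ᵥ !![1, ρ; ρ, 1]⁻¹ *ᵥ x) = 1) :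
    ∫ x : Fin 2 → ℝ, C / √(1 - ρ ^ 2) * g (x ⬝ᵥ !![1, ρ; ρ, 1]⁻¹ *ᵥ x) * (x 0 * x 1)
      = ρ / 2 * ((∫ t in Ioi (0:ℝ), t * g t) / ∫ t in Ioi (0:ℝ), g t) := by
  have hpos := sqrt_one_sub_sq_pos hρ
  rw [integral_const_mul, integral_comp_quadForm_corr hρ] at hnorm
  replace hnorm : C * π * ∫ t in Ioi (0:ℝ), g t = 1 := by rw [← hnorm]; field_simp
  have hI : ∫ t in Ioi (0:ℝ), g t ≠ 0 := by rintro h; simp [h] at hnorm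
  simp_rw [mul_assoc]
  rw [integral_const_mul, integral_comp_quadForm_corr_mul_mul hρ]
  field_simp [hpos.ne']
  linear_combination (ρ * ∫ t in Ioi (0:ℝ), t * g t) * hnorm

end CorrelationMoments

theorem integral_Ioi_eq_rpow_mul_Gamma_mul_PhiInt (v z a : ℝ) {s b : ℝ} (hs : 0 < s)
    (hb : 0 < b) :
    ∫ t in Ioi (0:ℝ), t ^ (s - 1) * exp (-a * t) / (1 - z * exp (-b * t)) ^ v
      = b ^ (-s) * (Gamma s * PhiInt v z s (a / b)) := by
  set G : ℝ → ℝ := fun u => u ^ (s - 1) * exp (-(a / b) * u) / (1 - z * exp (-u)) ^ v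
  have hb1 : b ^ (1 - s) * b ^ (s - 1) = 1 := by rw [← rpow_add hb]; norm_num
  have hG : ∀ t ∈ Ioi (0:ℝ), t ^ (s - 1) * exp (-a * t) / (1 - z * exp (-b * t)) ^ v
      = b ^ (1 - s) * G (b * t) := fun t ht => by
    simp only [G, mul_rpow hb.le (le_of_lt ht)]
    rw [show -(a / b) * (b * t) = -a * t by field_simp, show -(b * t) = -b * t by ring]
    linear_combination -(t ^ (s - 1) * exp (-a * t) / (1 - z * exp (-b * t)) ^ v) * hb1
  have hΓ : Gamma s ≠ 0 := (Gamma_pos_of_pos hs).ne'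
  calc _ = ∫ t in Ioi (0:ℝ), b ^ (1 - s) * G (b * t) := setIntegral_congr_fun measurableSet_Ioi hG
    _ = b ^ (1 - s) * (b⁻¹ * ∫ u in Ioi (0:ℝ), G u) := by
      rw [integral_const_mul, integral_comp_mul_left_Ioi G 0 hb, mul_zero, smul_eq_mul]
    _ = b ^ (-s) * (Gamma s * PhiInt v z s (a / b)) := by
      rw [PhiInt, ← mul_assoc (Gamma s), mul_one_div_cancel hΓ, one_mul, ← mul_assoc,
        ← rpow_neg_one, ← rpow_add hb, show 1 - s + -1 = -s by ring]

noncomputable def glGenerator (N a b r t : ℝ) : ℝ :=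
  t ^ (N - 1) * exp (-a * t) / (1 + exp (-b * t)) ^ (2 * r)

theorem integral_glGenerator (a r : ℝ) {N b : ℝ} (hN : 0 < N) (hb : 0 < b) :
    ∫ t in Ioi (0:ℝ), glGenerator N a b r t
      = b ^ (-N) * (Gamma N * PhiInt (2 * r) (-1) N (a / b)) := by
  simpa [glGenerator] using integral_Ioi_eq_rpow_mul_Gamma_mul_PhiInt (2 * r) (-1) a hN hb

theorem integral_mul_glGenerator (a r : ℝ) {N b : ℝ} (hN : 0 < N) (hb : 0 < b) :
    ∫ t in Ioi (0:ℝ), t * glGenerator N a b r t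
      = b ^ (-(N + 1)) * (Gamma (N + 1) * PhiInt (2 * r) (-1) (N + 1) (a / b)) := by
  rw [← integral_glGenerator a r (by linarith) hb]
  refine setIntegral_congr_fun measurableSet_Ioi fun t ht => ?_
  have ht0 : t ≠ 0 := (mem_Ioi.mp ht).ne'
  rw [glGenerator, glGenerator, add_sub_cancel_right, rpow_sub_one ht0]
  field_simp

theorem integral_mul_glGenerator_div_integral_glGenerator (a r : ℝ) {N b : ℝ} (hN : 0 < N)
    (hb : 0 < b) :
    (∫ t in Ioi (0:ℝ), t * glGenerator N a b r t) / ∫ t in Ioi (0:ℝ), glGenerator N a b r t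
      = N / b * (PhiInt (2 * r) (-1) (N + 1) (a / b) / PhiInt (2 * r) (-1) N (a / b)) := by
  have hΓ := (Gamma_pos_of_pos hN).ne'
  have hbN := (rpow_pos_of_pos hb (-N)).ne'
  rw [integral_mul_glGenerator a r hN hb, integral_glGenerator a r hN hb, Gamma_add_one hN.ne',
    neg_add, rpow_add hb, rpow_neg_one]
  field_simp

theorem gl_bivariate_covariance_general (N a b r C₂ ρ : ℝ)
    (hN : 1 ≤ N) (hb : 0 < b) (hρ : |ρ| < 1)
    (S : Matrix (Fin 2) (Fin 2) ℝ) (hSdef : S = !![1, ρ; ρ, 1])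
    (f : (Fin 2 → ℝ) → ℝ)
    (hf : f = fun x => C₂ / Real.sqrt S.det *
      ((dotProduct x (S⁻¹.mulVec x)) ^ (N - 1) *
        Real.exp (-a * dotProduct x (S⁻¹.mulVec x)) /
        (1 + Real.exp (-b * dotProduct x (S⁻¹.mulVec x))) ^ (2 * r)))
    (hnorm : ∫ x : Fin 2 → ℝ, f x = 1) :
    ∫ x : Fin 2 → ℝ, f x * (x 0 * x 1)
      = N / (2 * b) *
          (PhiInt (2 * r) (-1) (N + 1) (a / b) / PhiInt (2 * r) (-1) N (a / b)) * ρ := by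
  subst hSdef hf
  have hdet : (!![1, ρ; ρ, 1] : Matrix (Fin 2) (Fin 2) ℝ).det = 1 - ρ ^ 2 := by
    rw [det_fin_two_of]; ring
  rw [hdet] at hnorm ⊢
  refine (integral_mul_mul_eq_of_corr_elliptical hρ (glGenerator N a b r) hnorm).trans ?_
  rw [integral_mul_glGenerator_div_integral_glGenerator a r (by linarith) hb]
  ring

/-- Covariance of the bivariate GL distribution with μ = 0, Σ = [[1, ρ],[ρ, 1]] and
density generator g₂(t) = t^{N-1} e^{-at}/(1+e^{-bt})^{2r}. -/
theorem gl_bivariate_covariance (N a b r C₂ ρ : ℝ)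
    (hN : 1 ≤ N) (ha : 0 < a) (hb : 0 < b) (hr : 0 ≤ r) (hρ : |ρ| < 1)
    (S : Matrix (Fin 2) (Fin 2) ℝ) (hSdef : S = !![1, ρ; ρ, 1])
    (f : (Fin 2 → ℝ) → ℝ)
    (hf : f = fun x => C₂ / Real.sqrt S.det *
      ((dotProduct x (S⁻¹.mulVec x)) ^ (N - 1) *
        Real.exp (-a * dotProduct x (S⁻¹.mulVec x)) /
        (1 + Real.exp (-b * dotProduct x (S⁻¹.mulVec x))) ^ (2 * r)))
    (hnorm : ∫ x : Fin 2 → ℝ, f x = 1) :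
    ∫ x : Fin 2 → ℝ, f x * (x 0 * x 1)
      = N / (2 * b) *
          (PhiInt (2 * r) (-1) (N + 1) (a / b) / PhiInt (2 * r) (-1) N (a / b)) * ρ :=
  gl_bivariate_covariance_general N a b r C₂ ρ hN hb hρ S hSdef f hf hnorm
end
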